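/- Suppose n, m, k are non-negative integers with m > 0, 2 ≤ b ≤ 10, d the number of base-b digits of L_k, and L_n = F_m·b^d + L_k. Then d < n - m + 3 and n - k ≥ 1. -/
import Mathlib


def lucas : ℕ → ℕ
  | 0 => 2
  | 1 => 1
  | n + 2 => lucas (n + 1) + lucas n

theorem lucas_pos : ∀ n, 0 < lucas n
  | 0 => by simp [lucas]
  | 1 => by simp [lucas]
  | n + 2 => by
      have h1 := lucas_pos (n + 1)
      have h2 := lucas_pos n
      simp only [lucas]; omega

theorem lucas_le_two_pow : ∀ n, lucas (n + 1) ≤ 2 ^ (n + 1)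
  | 0 => by simp [lucas]
  | 1 => by simp [lucas]
  | n + 2 => by
      show lucas (n + 3) ≤ 2 ^ (n + 3)
      have h1 : lucas (n + 2) ≤ 2 ^ (n + 2) := lucas_le_two_pow (n + 1)
      have h2 : lucas (n + 1) ≤ 2 ^ (n + 1) := lucas_le_two_pow n
      have hl : lucas (n + 3) = lucas (n + 2) + lucas (n + 1) := rfl
      have hp : 2 ^ (n + 3) = 2 ^ (n + 2) + 2 ^ (n + 2) := by ring
      have hp2 : (2:ℕ) ^ (n + 1) ≤ 2 ^ (n + 2) := Nat.pow_le_pow_right (by norm_num) (by omega)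
      omega

theorem lucas_le_two_fib : ∀ n, lucas n ≤ 2 * Nat.fib (n + 1)
  | 0 => by simp [lucas]
  | 1 => by simp [lucas]
  | n + 2 => by
      show lucas (n + 2) ≤ 2 * Nat.fib (n + 3)
      have h1 : lucas (n + 1) ≤ 2 * Nat.fib (n + 2) := lucas_le_two_fib (n + 1)
      have h2 : lucas n ≤ 2 * Nat.fib (n + 1) := lucas_le_two_fib n
      have hl : lucas (n + 2) = lucas (n + 1) + lucas n := rfl
      have hf : Nat.fib (n + 3) = Nat.fib (n + 1) + Nat.fib (n + 2) := Nat.fib_add_two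
      omega

theorem lucas_succ_mono : ∀ n, lucas (n + 1) ≤ lucas (n + 2) := by
  intro n
  have h := lucas_pos n
  have hl : lucas (n + 2) = lucas (n + 1) + lucas n := rfl
  omega

theorem lucas_mono : ∀ c a, 1 ≤ a → a ≤ c → lucas a ≤ lucas c := by
  intro c
  induction c with
  | zero => intro a h1 h2; omega
  | succ c ih =>
      intro a h1 h2
      rcases Nat.lt_or_ge a (c + 1) with h | h
      · rcases c with _ | c'
        · omega
        · have h3 := ih a h1 (by omega)
          have h4 : lucas (c' + 1) ≤ lucas (c' + 1 + 1) := lucas_succ_mono c'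
          omega
      · have : a = c + 1 := by omega
        rw [this]

theorem lucas_key : ∀ m j, lucas (m + 1 + j) < Nat.fib (m + 1) * 2 ^ (j + 3)
  | 0, j => by
      rw [show 0 + 1 + j = j + 1 by omega]
      have h := lucas_le_two_pow j
      have h2 : (2:ℕ) ^ (j + 1) < 2 ^ (j + 3) := Nat.pow_lt_pow_right (by norm_num) (by omega)
      have : lucas (j + 1) < 2 ^ (j + 3) := lt_of_le_of_lt h h2
      simpa using this
  | 1, j => by
      rw [show 1 + 1 + j = j + 2 by omega]
      have h : lucas (j + 2) ≤ 2 ^ (j + 2) := lucas_le_two_pow (j + 1)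
      have h2 : (2:ℕ) ^ (j + 2) < 2 ^ (j + 3) := Nat.pow_lt_pow_right (by norm_num) (by omega)
      have : lucas (j + 2) < 2 ^ (j + 3) := lt_of_le_of_lt h h2
      simpa using this
  | m + 2, j => by
      have h1 := lucas_key (m + 1) j
      have h2 := lucas_key m j
      have hf : Nat.fib (m + 2 + 1) = Nat.fib (m + 1) + Nat.fib (m + 1 + 1) := by
        rw [show m + 2 + 1 = m + 1 + 2 by omega]; exact Nat.fib_add_two
      rw [show m + 2 + 1 + j = m + 1 + j + 2 by omega, hf]
      have hl : lucas (m + 1 + j + 2) = lucas (m + 1 + j + 1) + lucas (m + 1 + j) := rfl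
      have e2 : m + 1 + j + 1 = m + 1 + 1 + j := by omega
      rw [hl, e2]
      have hr : (Nat.fib (m + 1) + Nat.fib (m + 1 + 1)) * 2 ^ (j + 3)
          = Nat.fib (m + 1 + 1) * 2 ^ (j + 3) + Nat.fib (m + 1) * 2 ^ (j + 3) := by ring
      omega

theorem concat_fib_lucas_d_bound (n m k b d : ℕ) (hm : 0 < m)
    (hb : 2 ≤ b) (hb' : b ≤ 10) (hd : d = Nat.log b (lucas k) + 1)
    (heq : lucas n = Nat.fib m * b ^ d + lucas k) :
    (d : ℤ) < (n : ℤ) - m + 3 ∧ 1 ≤ (n : ℤ) - k := by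
  have hd1 : 1 ≤ d := by omega
  have hfib : 1 ≤ Nat.fib m := Nat.fib_pos.mpr hm
  have hbd : (2:ℕ) ^ d ≤ b ^ d := Nat.pow_le_pow_left hb d
  have h2d : 2 ≤ 2 ^ d := by
    calc 2 = 2 ^ 1 := rfl
      _ ≤ 2 ^ d := Nat.pow_le_pow_right (by norm_num) hd1
  have hbd2 : 2 ≤ b ^ d := le_trans h2d hbd
  have hlk : 1 ≤ lucas k := lucas_pos k
  have h1 : Nat.fib m * 2 ^ d ≤ lucas n := by
    calc Nat.fib m * 2 ^ d ≤ Nat.fib m * b ^ d := Nat.mul_le_mul_left _ hbd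
      _ ≤ lucas n := by omega
  have hbig : 2 ≤ Nat.fib m * b ^ d := le_trans hbd2 (Nat.le_mul_of_pos_left _ hfib)
  -- second part : k < n
  have hkn : k < n := by
    by_contra hcon
    push_neg at hcon
    have hle : lucas n ≤ lucas k + 1 := by
      rcases Nat.eq_zero_or_pos n with h0 | hpos
      · subst h0
        have : lucas 0 = 2 := rfl
        omega
      · have := lucas_mono k n hpos hcon
        omega
    omega
  refine ⟨?_, by omega⟩
  -- first part : d + m ≤ n + 2
  have key : d + m ≤ n + 2 := by
    by_contra hcon
    push_neg at hcon
    rcases le_or_gt m n with hmn | hmn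
    · -- m ≤ n
      obtain ⟨m', rfl⟩ : ∃ m', m = m' + 1 := ⟨m - 1, by omega⟩
      set j := n - m' - 1 with hj
      have hjd : j + 3 ≤ d := by omega
      have hk2 := lucas_key m' j
      have e : m' + 1 + j = n := by omega
      rw [e] at hk2
      have : Nat.fib (m' + 1) * 2 ^ (j + 3) ≤ Nat.fib (m' + 1) * 2 ^ d :=
        Nat.mul_le_mul_left _ (Nat.pow_le_pow_right (by norm_num) hjd)
      omega
    · -- n < m
      have hfm : lucas n ≤ 2 * Nat.fib m := by
        calc lucas n ≤ 2 * Nat.fib (n + 1) := lucas_le_two_fib n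
          _ ≤ 2 * Nat.fib m := Nat.mul_le_mul_left _ (Nat.fib_mono (by omega))
      have hmm : Nat.fib m * 2 ≤ Nat.fib m * b ^ d := Nat.mul_le_mul_left _ hbd2
      omega
  omega
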